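/- Let Y be a multiset of n points in ℝ^d with (1/n)∑_i y_i y_iᵀ ⪯ (1+ε)I, and let X ⊆ Y with |X| = αn be such that for every direction v, at least (α/2)n points x of X satisfy ⟨x,v⟩² ≥ (α/4)·vᵀΣ*v, where Σ* = E_{x∼X} x xᵀ. Then Σ* ⪯ (8/α²)·(1+ε)·I. -/

import Mathlib

open Matrix Finset

/-!
Fix a direction `v` and write `S` for the mean of `⟨x, v⟩²` over `X`. At least `(α/2) n` points
of `X` have `⟨x, v⟩² ≥ (α/4) S`, so `(α²/8) n S` is at most the sum of `⟨x, v⟩²` over `X`, hence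
over all of `Y`, which isotropy bounds by `n (1 + ε) ‖v‖²`. Dividing by `n` gives
`S ≤ (8/α²)(1 + ε) ‖v‖²`, the claimed Loewner bound tested against `v`.
-/

section SecondMoment

variable {ι m : Type*} [Fintype m]

theorem dotProduct_sum_vecMulVec_self_mulVec (s : Finset ι) (y : ι → m → ℝ) (v : m → ℝ) :
    v ⬝ᵥ ((∑ i ∈ s, vecMulVec (y i) (y i)) *ᵥ v) = ∑ i ∈ s, (y i ⬝ᵥ v) ^ 2 := by
  simp only [sum_mulVec, vecMulVec_mulVec, op_smul_eq_smul, dotProduct_sum, dotProduct_smul,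
    smul_eq_mul, sq]
  exact sum_congr rfl fun i _ => by rw [dotProduct_comm v]

theorem isHermitian_sum_vecMulVec_self (s : Finset ι) (y : ι → m → ℝ) :
    (∑ i ∈ s, vecMulVec (y i) (y i)).IsHermitian :=
  (posSemidef_sum s fun i _ => by simpa using posSemidef_vecMulVec_self_star (y i)).isHermitian

end SecondMoment

theorem posSemidef_smul_one_sub_of_dotProduct_mulVec_le {m : Type*} [Fintype m] [DecidableEq m]
    {A : Matrix m m ℝ} (hA : A.IsHermitian) {c : ℝ} (h : ∀ v, v ⬝ᵥ (A *ᵥ v) ≤ c * (v ⬝ᵥ v)) :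
    (c • 1 - A).PosSemidef := by
  refine .of_dotProduct_mulVec_nonneg ((isHermitian_one.smul (.all _)).sub hA) fun v => ?_
  simpa [sub_mulVec, dotProduct_sub, smul_mulVec, dotProduct_smul] using h v

theorem Finset.card_filter_mul_le_sum {ι : Type*} {s : Finset ι} {f : ι → ℝ}
    (hf : ∀ i ∈ s, 0 ≤ f i) (t : ℝ) : #(s.filter (t ≤ f ·)) * t ≤ ∑ i ∈ s, f i := by
  calc #(s.filter (t ≤ f ·)) * t ≤ ∑ i ∈ s.filter (t ≤ f ·), f i := by
        simpa using card_nsmul_le_sum _ f t fun i hi => (mem_filter.1 hi).2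
    _ ≤ ∑ i ∈ s, f i := sum_le_sum_of_subset_of_nonneg (filter_subset _ _)
        fun i hi _ => hf i hi

theorem mean_le_of_anticoncentration {ι : Type*} {X : Finset ι} {f : ι → ℝ}
    (hf : ∀ i ∈ X, 0 ≤ f i) {α N B : ℝ} (hα : 0 < α) (hN : 0 < N)
    (hanti : α / 2 * N ≤ #(X.filter (α / 4 * ((#X : ℝ)⁻¹ * ∑ j ∈ X, f j) ≤ f ·)))
    (htotal : ∑ i ∈ X, f i ≤ N * B) :
    (#X : ℝ)⁻¹ * ∑ i ∈ X, f i ≤ 8 / α ^ 2 * B := by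
  set S := (#X : ℝ)⁻¹ * ∑ i ∈ X, f i
  have hS : 0 ≤ S := mul_nonneg (by positivity) (sum_nonneg hf)
  have key : α / 2 * N * (α / 4 * S) ≤ N * B :=
    (mul_le_mul_of_nonneg_right hanti (by positivity)).trans
      ((card_filter_mul_le_sum hf _).trans htotal)
  rw [div_mul_eq_mul_div, le_div_iff₀ (by positivity)]
  nlinarith

theorem inlier_second_moment_upper_bound_general {d n : ℕ} (hn : 0 < n)
    (y : Fin n → Fin d → ℝ) (ε α : ℝ) (hα : 0 < α)
    (X : Finset (Fin n))
    (hiso : ∀ v : Fin d → ℝ, (1 / n : ℝ) * ∑ i, (y i ⬝ᵥ v) ^ 2 ≤ (1 + ε) * (v ⬝ᵥ v))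
    (hanti : ∀ v : Fin d → ℝ, (α / 2) * n ≤
      ((X.filter (fun i =>
        (α / 4) * ((X.card : ℝ)⁻¹ * ∑ j ∈ X, (y j ⬝ᵥ v) ^ 2) ≤ (y i ⬝ᵥ v) ^ 2)).card : ℝ)) :
    (((8 / α ^ 2) * (1 + ε)) • (1 : Matrix (Fin d) (Fin d) ℝ) -
      (X.card : ℝ)⁻¹ • ∑ i ∈ X, vecMulVec (y i) (y i)).PosSemidef := by
  have hn' : (0 : ℝ) < n := by exact_mod_cast hn
  refine posSemidef_smul_one_sub_of_dotProduct_mulVec_le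
    ((isHermitian_sum_vecMulVec_self X y).smul (.all _)) fun v => ?_
  have htotal : ∑ i ∈ X, (y i ⬝ᵥ v) ^ 2 ≤ n * ((1 + ε) * (v ⬝ᵥ v)) :=
    calc ∑ i ∈ X, (y i ⬝ᵥ v) ^ 2 ≤ ∑ i, (y i ⬝ᵥ v) ^ 2 :=
          sum_le_sum_of_subset_of_nonneg (subset_univ X) fun i _ _ => sq_nonneg _
      _ ≤ n * ((1 + ε) * (v ⬝ᵥ v)) := by
          rw [← div_le_iff₀' hn', ← one_div_mul_eq_div]; exact hiso v
  rw [smul_mulVec, dotProduct_smul, dotProduct_sum_vecMulVec_self_mulVec, smul_eq_mul, mul_assoc]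
  exact mean_le_of_anticoncentration (fun i _ => sq_nonneg _) hα hn' (hanti v) htotal

theorem inlier_second_moment_upper_bound {d n : ℕ} (hn : 0 < n)
    (y : Fin n → Fin d → ℝ) (ε α : ℝ) (hε : 0 ≤ ε) (hα : 0 < α) (hα1 : α ≤ 1)
    (X : Finset (Fin n)) (hX : (X.card : ℝ) = α * n)
    (hiso : ∀ v : Fin d → ℝ, (1 / n : ℝ) * ∑ i, (y i ⬝ᵥ v) ^ 2 ≤ (1 + ε) * (v ⬝ᵥ v))
    (hanti : ∀ v : Fin d → ℝ, (α / 2) * n ≤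
      ((X.filter (fun i =>
        (α / 4) * ((X.card : ℝ)⁻¹ * ∑ j ∈ X, (y j ⬝ᵥ v) ^ 2) ≤ (y i ⬝ᵥ v) ^ 2)).card : ℝ)) :
    (((8 / α ^ 2) * (1 + ε)) • (1 : Matrix (Fin d) (Fin d) ℝ) -
      (X.card : ℝ)⁻¹ • ∑ i ∈ X, vecMulVec (y i) (y i)).PosSemidef :=
  inlier_second_moment_upper_bound_general hn y ε α hα X hiso hanti
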